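/- arXiv:1305.0177 — 2 statements merged into one kernel-verified Lean document; each statement's English description precedes it below -/
import Mathlib

section
/- There is a constant k_0 ∈ ℕ such that for every k ≥ k_0, every c ∈ [0,4], and d = 2k·ln k − ln k − c, the following holds w.h.p. for G = G(n,⌈dn/2⌉): every k-coloring σ of G satisfies | |σ^{-1}(i)| − n/k | ≤ n/(k·(ln k)^{1/3}) for all colors i ∈ {1,...,k}. -/
open Filter

/-- Uniform counting probability on a finite sample space `Ω`. -/
noncomputable def prob {Ω : Type*} (p : Ω → Prop) : ℝ :=
  (Nat.card {x : Ω // p x} : ℝ) / (Nat.card Ω : ℝ)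

/-- The sample space of the random graph `G(n,m)`. -/
def GraphSpace (n m : ℕ) : Type :=
  {E : Finset (Sym2 (Fin n)) // E.card = m ∧ ∀ e ∈ E, ¬ e.IsDiag}

/-- `σ` is a proper `k`-coloring of the graph with edge set `E`. -/
def IsColoring {n k : ℕ} (E : Finset (Sym2 (Fin n))) (σ : Fin n → Fin k) : Prop :=
  ∀ u v : Fin n, s(u, v) ∈ E → σ u ≠ σ v

open Finset Topology

/-!
First moment method. If a map `σ : [n] → [k]` has a colour class whose size is off from
`n / k` by at least `n s`, then `∑ᵢ |σ⁻¹(i)|² ≥ n² / k + (n s)²`, so at most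
`F ≤ (1 - 1/k) (1 - s²) n² / 2` of the `N = n(n-1)/2` pairs are bichromatic. A uniformly
random set of `m` pairs avoids all monochromatic pairs with probability
`C(F, m) / C(N, m) ≤ (F / N) ^ m`, and a union bound over the `kⁿ` maps bounds the
probability of an unbalanced colouring by `exp (n (ln k + (d/2) ln ((1 - 1/k) e^{-s²})) + O(d))`.
For `s = 1 / (k (ln k)^{1/3})` and `d = 2k ln k - ln k - c` the exponent per vertex is negative
once `ln k ≥ 1000`: the term `ln k + (d/2) ln (1 - 1/k)` is only `O(1/k)`, while
`d s² / 2 ≈ (ln k)^{1/3} / k`.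
-/

theorem Real.log_one_sub_le_neg_sub_sq_div_two {x : ℝ} (h₀ : 0 ≤ x) (h₁ : x < 1) :
    Real.log (1 - x) ≤ -x - x ^ 2 / 2 := by
  have hser := Real.hasSum_pow_div_log_of_abs_lt_one (abs_lt.2 ⟨by linarith, h₁⟩)
  have := sum_le_hasSum (range 2) (fun i _ => by positivity) hser
  norm_num [sum_range_succ] at this
  linarith

theorem log_add_half_mul_log_lt_zero {k c d : ℝ} (hk : Real.exp 1000 ≤ k) (hc₀ : 0 ≤ c)
    (hc₄ : c ≤ 4) (hd : d = 2 * k * Real.log k - Real.log k - c) :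
    Real.log k + d / 2 *
      Real.log ((1 - 1 / k) * Real.exp (-(1 / (k * Real.log k ^ ((1 : ℝ) / 3))) ^ 2)) < 0 := by
  set L := Real.log k
  set X := L ^ ((1 : ℝ) / 3)
  have hk₀ : 0 < k := (Real.exp_pos _).trans_le hk
  have hL : 1000 ≤ L := (Real.le_log_iff_exp_le hk₀).2 hk
  have hLk : L ≤ k := (Real.log_le_sub_one_of_pos hk₀).trans (by linarith)
  have hX₀ : 0 < X := by positivity
  have hX3 : X ^ 3 = L := by
    rw [← Real.rpow_natCast, ← Real.rpow_mul (by linarith)]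
    norm_num
  have hX : 10 ≤ X := by nlinarith [sq_nonneg (X - 10), sq_nonneg X]
  have hd₀ : k * L ≤ d := by rw [hd]; nlinarith
  have hinv : 1 / k < 1 := by rw [div_lt_one hk₀]; linarith
  have hlog : Real.log (1 - 1 / k) ≤ -(1 / k) - (1 / k) ^ 2 / 2 :=
    Real.log_one_sub_le_neg_sub_sq_div_two (by positivity) hinv
  have hA : L + d / 2 * Real.log (1 - 1 / k) ≤ 4 / k := by
    have hid : L + d / 2 * (-(1 / k) - (1 / k) ^ 2 / 2) = (L + 2 * k * c + c) / (4 * k ^ 2) := by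
      rw [hd]; field_simp; ring
    have : (L + 2 * k * c + c) / (4 * k ^ 2) ≤ 4 / k := by
      rw [div_le_div_iff₀ (by positivity) hk₀]; nlinarith
    linarith [mul_le_mul_of_nonneg_left hlog (by linarith : 0 ≤ d / 2)]
  have hB : 5 / k ≤ d / 2 * (1 / (k * X)) ^ 2 := by
    rw [show d / 2 * (1 / (k * X)) ^ 2 = d / (2 * k ^ 2 * X ^ 2) by field_simp,
      div_le_div_iff₀ hk₀ (by positivity)]
    nlinarith [mul_le_mul_of_nonneg_left hX (by positivity : 0 ≤ k * X ^ 2)]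
  rw [Real.log_mul (by linarith) (Real.exp_pos _).ne', Real.log_exp]
  have : 4 / k - 5 / k < 0 := by rw [← sub_div]; exact div_neg_of_neg_of_pos (by norm_num) hk₀
  linarith

theorem tendsto_pow_mul_pow_ceil_atTop_nhds_zero {K r d : ℝ} (hK : 0 < K) (hr₀ : 0 < r)
    (hr₁ : r ≤ 1) (hd : 0 ≤ d) (h : Real.log K + d / 2 * Real.log r < 0) :
    Tendsto (fun n : ℕ => K ^ n * (r * (n / (n - 1))) ^ ⌈d * n / 2⌉₊) atTop (𝓝 0) := by
  set ℓ := Real.log K + d / 2 * Real.log r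
  have hbound : ∀ n : ℕ, 2 ≤ n →
      0 ≤ K ^ n * (r * (n / (n - 1))) ^ ⌈d * n / 2⌉₊ ∧
      K ^ n * (r * (n / (n - 1))) ^ ⌈d * n / 2⌉₊ ≤ Real.exp (d + 1) * Real.exp ℓ ^ n := by
    intro n hn
    set m := ⌈d * n / 2⌉₊
    have hn₂ : (2 : ℝ) ≤ n := by exact_mod_cast hn
    have hq : 0 < (n : ℝ) / (n - 1) := div_pos (by linarith) (by linarith)
    refine ⟨by positivity, ?_⟩
    have hm_ge : d * n / 2 ≤ m := Nat.le_ceil _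
    have hm_le : (m : ℝ) ≤ d * n / 2 + 1 := (Nat.ceil_lt_add_one (by positivity)).le
    have hratio : Real.log (n / (n - 1)) ≤ 1 / (n - 1) := by
      have := Real.log_le_sub_one_of_pos hq
      rwa [div_sub_one (by linarith), sub_sub_cancel] at this
    have hlog : Real.log (K ^ n * (r * (n / (n - 1))) ^ m) ≤ (d + 1) + n * ℓ := by
      rw [Real.log_mul (by positivity) (by positivity), Real.log_pow, Real.log_pow,
        Real.log_mul hr₀.ne' hq.ne']
      have h1 : (m : ℝ) * Real.log r ≤ d * n / 2 * Real.log r :=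
        mul_le_mul_of_nonpos_right hm_ge (Real.log_nonpos hr₀.le hr₁)
      have h2 : (m : ℝ) * Real.log (n / (n - 1)) ≤ d + 1 := by
        calc (m : ℝ) * Real.log (n / (n - 1)) ≤ (d * n / 2 + 1) * (1 / (n - 1)) := by
              gcongr
              · exact Real.log_nonneg (by rw [le_div_iff₀ (by linarith)]; linarith)
          _ ≤ d + 1 := by
              rw [mul_one_div, div_le_iff₀ (by linarith)]
              nlinarith
      have hℓ : (n : ℝ) * ℓ = n * Real.log K + d * n / 2 * Real.log r := by
        simp only [ℓ]; ring
      linarith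
    calc K ^ n * (r * (n / (n - 1))) ^ m
        = Real.exp (Real.log (K ^ n * (r * (n / (n - 1))) ^ m)) :=
          (Real.exp_log (by positivity)).symm
      _ ≤ Real.exp ((d + 1) + n * ℓ) := Real.exp_le_exp.2 hlog
      _ = Real.exp (d + 1) * Real.exp ℓ ^ n := by rw [Real.exp_add, Real.exp_nat_mul]
  have hgeom : Tendsto (fun n : ℕ => Real.exp (d + 1) * Real.exp ℓ ^ n) atTop (𝓝 0) := by
    simpa using (tendsto_pow_atTop_nhds_zero_of_lt_one (Real.exp_pos ℓ).le
      (Real.exp_lt_one_iff.2 h)).const_mul (Real.exp (d + 1))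
  refine squeeze_zero' ?_ ?_ hgeom <;> filter_upwards [eventually_ge_atTop 2] with n hn
  exacts [(hbound n hn).1, (hbound n hn).2]

theorem Nat.descFactorial_mul_pow_le {F N : ℕ} (h : F ≤ N) (m : ℕ) :
    F.descFactorial m * N ^ m ≤ N.descFactorial m * F ^ m := by
  induction m with
  | zero => simp
  | succ m ih =>
    have hstep : (F - m) * N ≤ (N - m) * F :=
      calc (F - m) * N = N * F - m * N := by rw [Nat.sub_mul, mul_comm]
        _ ≤ N * F - m * F := Nat.sub_le_sub_left (Nat.mul_le_mul_left m h) _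
        _ = (N - m) * F := by rw [Nat.sub_mul]
    rw [descFactorial_succ, descFactorial_succ, pow_succ, pow_succ]
    calc (F - m) * F.descFactorial m * (N ^ m * N)
        = ((F - m) * N) * (F.descFactorial m * N ^ m) := by ring
      _ ≤ ((N - m) * F) * (N.descFactorial m * F ^ m) := Nat.mul_le_mul hstep ih
      _ = (N - m) * N.descFactorial m * (F ^ m * F) := by ring

theorem Nat.choose_div_choose_le_pow {F N : ℕ} (h : F ≤ N) (m : ℕ) :
    (F.choose m : ℝ) / N.choose m ≤ ((F : ℝ) / N) ^ m := by
  rcases (N.choose m).eq_zero_or_pos with hN | hN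
  · simp only [hN, Nat.cast_zero, div_zero]; positivity
  have hmul : F.choose m * N ^ m ≤ N.choose m * F ^ m := by
    have := Nat.descFactorial_mul_pow_le h m
    rw [descFactorial_eq_factorial_mul_choose, descFactorial_eq_factorial_mul_choose,
      mul_assoc, mul_assoc] at this
    exact Nat.le_of_mul_le_mul_left this (factorial_pos m)
  have hNm : (0 : ℝ) < (N : ℝ) ^ m := by exact_mod_cast hN.trans_le (choose_le_pow N m)
  rw [div_pow, div_le_div_iff₀ (by exact_mod_cast hN) hNm, mul_comm ((F : ℝ) ^ m)]
  exact_mod_cast hmul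

section Prob

variable {Ω : Type*}

theorem prob_nonneg (p : Ω → Prop) : 0 ≤ prob p :=
  div_nonneg (Nat.cast_nonneg _) (Nat.cast_nonneg _)

variable [Fintype Ω]

theorem prob_mono {p q : Ω → Prop} (h : ∀ x, p x → q x) : prob p ≤ prob q := by
  unfold prob
  gcongr
  exact Nat.card_mono (Set.toFinite _) h

theorem prob_exists_le_sum {ι : Type*} [Fintype ι] (p : ι → Ω → Prop) :
    prob (fun x => ∃ i, p i x) ≤ ∑ i, prob (p i) := by
  classical
  simp only [prob, ← sum_div, Nat.card_eq_fintype_card, Fintype.card_subtype]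
  gcongr
  have : univ.filter (fun x => ∃ i, p i x) = univ.biUnion fun i => univ.filter (p i) := by
    ext; simp
  rw [this]
  exact_mod_cast card_biUnion_le

theorem prob_not [Nonempty Ω] (p : Ω → Prop) : prob (fun x => ¬ p x) = 1 - prob p := by
  classical
  have hΩ : (Fintype.card Ω : ℝ) ≠ 0 := by exact_mod_cast Fintype.card_ne_zero
  have hsplit : (#{x | p x} : ℝ) + #{x | ¬ p x} = Fintype.card Ω := by
    exact_mod_cast card_filter_add_card_filter_not (s := univ) p
  simp only [prob, Nat.card_eq_fintype_card, Fintype.card_subtype]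
  field_simp
  linarith

theorem tendsto_prob_one_of_tendsto_prob_not_zero {Ω : ℕ → Type*} [∀ n, Fintype (Ω n)]
    {p : ∀ n, Ω n → Prop} (hne : ∀ᶠ n in atTop, Nonempty (Ω n))
    (h : Tendsto (fun n => prob (fun x => ¬ p n x)) atTop (𝓝 0)) :
    Tendsto (fun n => prob (p n)) atTop (𝓝 1) := by
  have hcongr : (fun n => 1 - prob (fun x => ¬ p n x)) =ᶠ[atTop] fun n => prob (p n) := by
    filter_upwards [hne] with n hn
    rw [prob_not]; ring
  simpa using (h.const_sub 1).congr' hcongr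

end Prob

theorem sq_sum_div_card_add_sq_sub_le_sum_sq {ι : Type*} {s : Finset ι} (x : ι → ℝ) {j : ι}
    (hj : j ∈ s) :
    (∑ i ∈ s, x i) ^ 2 / #s + (x j - (∑ i ∈ s, x i) / #s) ^ 2 ≤ ∑ i ∈ s, x i ^ 2 := by
  set μ := (∑ i ∈ s, x i) / #s
  have hs : (#s : ℝ) ≠ 0 := by exact_mod_cast (card_pos.2 ⟨j, hj⟩).ne'
  have hvar : ∑ i ∈ s, (x i - μ) ^ 2 = ∑ i ∈ s, x i ^ 2 - (∑ i ∈ s, x i) ^ 2 / #s := by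
    simp only [sub_sq, sum_add_distrib, sum_sub_distrib, sum_const, nsmul_eq_mul, ← sum_mul,
      ← mul_sum, μ]
    field_simp
    ring
  have := single_le_sum (f := fun i => (x i - μ) ^ 2) (fun i _ => sq_nonneg _) hj
  linarith

theorem Fintype.sum_card_fiber_eq_card {V κ : Type*} [Fintype V] [Fintype κ] [DecidableEq κ]
    (σ : V → κ) : ∑ i, Nat.card {v // σ v = i} = Fintype.card V := by
  simpa [Nat.card_eq_fintype_card] using Fintype.sum_fiberwise' σ (fun _ => (1 : ℕ))

-- `(⊤ : SimpleGraph κ).comap σ` is the complete multipartite graph on the colour classes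
-- of `σ`: its edges are exactly the pairs that `σ` colours properly.
theorem SimpleGraph.two_mul_card_edgeFinset_comap_top_add_sum_sq {V κ : Type*} [Fintype V]
    [Fintype κ] [DecidableEq κ] (σ : V → κ) :
    2 * #((⊤ : SimpleGraph κ).comap σ).edgeFinset + ∑ i, Nat.card {v // σ v = i} ^ 2 =
      Fintype.card V ^ 2 := by
  rw [← sum_degrees_eq_twice_card_edges]
  have hdeg : ∀ v, ((⊤ : SimpleGraph κ).comap σ).degree v + Nat.card {u // σ u = σ v} =
      Fintype.card V := by
    intro v
    rw [← card_neighborFinset_eq_degree, neighborFinset_eq_filter, Nat.card_eq_fintype_card,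
      Fintype.card_subtype, ← card_univ]
    simpa [eq_comm, add_comm] using
      card_filter_add_card_filter_not (s := univ) (fun u => σ u = σ v)
  have hsq : ∑ i, Nat.card {v // σ v = i} ^ 2 = ∑ v, Nat.card {u // σ u = σ v} := by
    rw [← Fintype.sum_fiberwise' σ (fun i => Nat.card {u // σ u = i})]
    simp [sq, Nat.card_eq_fintype_card]
  rw [hsq, ← sum_add_distrib, sum_congr rfl fun v _ => hdeg v]
  simp [sq]

theorem two_mul_card_edgeFinset_comap_top_le {V κ : Type*} [Fintype V] [Fintype κ]
    [DecidableEq κ] (σ : V → κ) (j : κ) :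
    2 * (#((⊤ : SimpleGraph κ).comap σ).edgeFinset : ℝ) ≤
      (1 - 1 / Fintype.card κ) * (Fintype.card V ^ 2 -
        (Nat.card {v // σ v = j} - Fintype.card V / Fintype.card κ) ^ 2) := by
  have hcount : 2 * (#((⊤ : SimpleGraph κ).comap σ).edgeFinset : ℝ) +
      ∑ i, (Nat.card {v // σ v = i} : ℝ) ^ 2 = Fintype.card V ^ 2 := by
    exact_mod_cast SimpleGraph.two_mul_card_edgeFinset_comap_top_add_sum_sq σ
  have hvar := sq_sum_div_card_add_sq_sub_le_sum_sq (s := univ)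
    (fun i => (Nat.card {v // σ v = i} : ℝ)) (mem_univ j)
  rw [← Nat.cast_sum, Fintype.sum_card_fiber_eq_card, card_univ] at hvar
  have hdev : 0 ≤ (Nat.card {v // σ v = j} - Fintype.card V / Fintype.card κ : ℝ) ^ 2 /
      Fintype.card κ := by positivity
  linear_combination hcount + hvar + hdev

noncomputable instance (n m : ℕ) : Fintype (GraphSpace n m) := by
  unfold GraphSpace
  classical
  infer_instance

theorem card_graphSpace (n m : ℕ) : Nat.card (GraphSpace n m) = (n.choose 2).choose m := by
  have e : GraphSpace n m ≃ powersetCard m (⊤ : SimpleGraph (Fin n)).edgeFinset :=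
    Equiv.subtypeEquivRight fun E => by
      simp [mem_powersetCard, subset_iff, and_comm]
  rw [Nat.card_congr e, Nat.card_eq_fintype_card, Fintype.card_coe, card_powersetCard,
    SimpleGraph.card_edgeFinset_top_eq_card_choose_two, Fintype.card_fin]

theorem eventually_nonempty_graphSpace (d : ℝ) :
    ∀ᶠ n : ℕ in atTop, Nonempty (GraphSpace n ⌈d * n / 2⌉₊) := by
  filter_upwards [tendsto_natCast_atTop_atTop.eventually_ge_atTop (d + 1)] with n hn
  refine (Nat.card_pos_iff.1 ?_).1
  rw [card_graphSpace]
  refine Nat.choose_pos (Nat.ceil_le.2 ?_)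
  rw [Nat.cast_choose_two]
  have : (0 : ℝ) ≤ n := n.cast_nonneg
  nlinarith

theorem IsColoring.subset_edgeFinset_comap_top {n k : ℕ} {E : Finset (Sym2 (Fin n))}
    {σ : Fin n → Fin k} (h : IsColoring E σ) :
    E ⊆ ((⊤ : SimpleGraph (Fin k)).comap σ).edgeFinset := by
  intro e he
  induction e with
  | h u v => simpa using h u v he

theorem prob_isColoring_le {n k : ℕ} (m : ℕ) (σ : Fin n → Fin k) :
    prob (fun G : GraphSpace n m => IsColoring G.1 σ) ≤
      ((#((⊤ : SimpleGraph (Fin k)).comap σ).edgeFinset : ℝ) / n.choose 2) ^ m := by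
  set F := ((⊤ : SimpleGraph (Fin k)).comap σ).edgeFinset
  have hcard : Nat.card {G : GraphSpace n m // IsColoring G.1 σ} ≤ (#F).choose m := by
    let f : {G : GraphSpace n m // IsColoring G.1 σ} → powersetCard m F := fun G =>
      ⟨G.1.1, mem_powersetCard.2 ⟨G.2.subset_edgeFinset_comap_top, G.1.2.1⟩⟩
    have hf : Function.Injective f := fun G H h =>
      Subtype.ext (Subtype.ext (congrArg (fun E => E.1) h))
    refine (Nat.card_le_card_of_injective f hf).trans_eq ?_
    rw [Nat.card_eq_fintype_card, Fintype.card_coe, card_powersetCard]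
  have hF : #F ≤ n.choose 2 := by
    simpa using SimpleGraph.card_edgeFinset_le_card_choose_two
      (G := (⊤ : SimpleGraph (Fin k)).comap σ)
  calc prob (fun G : GraphSpace n m => IsColoring G.1 σ)
      ≤ ((#F).choose m : ℝ) / (n.choose 2).choose m := by
        rw [prob, card_graphSpace]
        gcongr
    _ ≤ _ := Nat.choose_div_choose_le_pow hF m

theorem card_edgeFinset_comap_top_div_le {n k : ℕ} (hn : 2 ≤ n) (σ : Fin n → Fin k)
    (i : Fin k) {s : ℝ} (hs₀ : 0 ≤ s)
    (hs : n * s ≤ |(Nat.card {v // σ v = i} : ℝ) - n / k|) :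
    (#((⊤ : SimpleGraph (Fin k)).comap σ).edgeFinset : ℝ) / n.choose 2 ≤
      (1 - 1 / k) * Real.exp (-s ^ 2) * (n / (n - 1)) := by
  have hbichrom := two_mul_card_edgeFinset_comap_top_le σ i
  simp only [Fintype.card_fin] at hbichrom
  set t : ℝ := Nat.card {v // σ v = i} - n / k
  have hn₀ : (0 : ℝ) < n := by positivity
  have hn₁ : (0 : ℝ) < n - 1 := by
    have : (2 : ℝ) ≤ n := by exact_mod_cast hn
    linarith
  have hk : (0 : ℝ) ≤ 1 - 1 / k := sub_nonneg.2 (by simpa using Nat.cast_inv_le_one k)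
  have hst : s ^ 2 ≤ (t / n) ^ 2 := by
    rw [← sq_abs (t / n), abs_div, abs_of_pos hn₀]
    gcongr
    rwa [le_div_iff₀ hn₀, mul_comm]
  have hexp : 1 - (t / n) ^ 2 ≤ Real.exp (-s ^ 2) :=
    (Real.one_sub_le_exp_neg _).trans (Real.exp_le_exp.2 (neg_le_neg hst))
  calc (#((⊤ : SimpleGraph (Fin k)).comap σ).edgeFinset : ℝ) / n.choose 2
      ≤ (1 - 1 / k) * (n ^ 2 - t ^ 2) / (n * (n - 1)) := by
        rw [Nat.cast_choose_two, div_le_div_iff₀ (by positivity) (by positivity)]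
        nlinarith [mul_le_mul_of_nonneg_right hbichrom (by positivity : (0 : ℝ) ≤ n * (n - 1))]
    _ = (1 - 1 / k) * (1 - (t / n) ^ 2) * (n / (n - 1)) := by
        field_simp
    _ ≤ (1 - 1 / k) * Real.exp (-s ^ 2) * (n / (n - 1)) := by
        gcongr

theorem prob_exists_unbalanced_coloring_le {n k : ℕ} (m : ℕ) (hn : 2 ≤ n) {s : ℝ}
    (hs : 0 ≤ s) :
    prob (fun G : GraphSpace n m => ∃ σ : Fin n → Fin k, IsColoring G.1 σ ∧
        ∃ i, n * s ≤ |(Nat.card {v // σ v = i} : ℝ) - n / k|) ≤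
      k ^ n * ((1 - 1 / k) * Real.exp (-s ^ 2) * (n / (n - 1))) ^ m := by
  have hW : 0 ≤ (1 - 1 / k) * Real.exp (-s ^ 2) * (n / (n - 1) : ℝ) := by
    have hk : (0 : ℝ) ≤ 1 - 1 / k := sub_nonneg.2 (by simpa using Nat.cast_inv_le_one k)
    have hn : (1 : ℝ) ≤ n := by exact_mod_cast (by omega : 1 ≤ n)
    exact mul_nonneg (mul_nonneg hk (Real.exp_pos _).le) (by bound)
  have hσ : ∀ σ : Fin n → Fin k,
      prob (fun G : GraphSpace n m => IsColoring G.1 σ ∧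
        ∃ i, n * s ≤ |(Nat.card {v // σ v = i} : ℝ) - n / k|) ≤
      ((1 - 1 / k) * Real.exp (-s ^ 2) * (n / (n - 1))) ^ m := by
    intro σ
    by_cases hbad : ∃ i, n * s ≤ |(Nat.card {v // σ v = i} : ℝ) - n / k|
    · obtain ⟨i, hi⟩ := hbad
      calc _ ≤ prob (fun G : GraphSpace n m => IsColoring G.1 σ) := prob_mono fun _ h => h.1
        _ ≤ _ := prob_isColoring_le m σ
        _ ≤ _ := by
          gcongr
          exact card_edgeFinset_comap_top_div_le hn σ i hs hi
    · calc _ ≤ prob (fun _ : GraphSpace n m => False) := prob_mono fun _ h => hbad h.2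
        _ = 0 := by simp [prob]
        _ ≤ _ := pow_nonneg hW m
  calc _ ≤ ∑ σ : Fin n → Fin k, prob (fun G : GraphSpace n m => IsColoring G.1 σ ∧
        ∃ i, n * s ≤ |(Nat.card {v // σ v = i} : ℝ) - n / k|) := prob_exists_le_sum _
    _ ≤ ∑ _σ : Fin n → Fin k, ((1 - 1 / k) * Real.exp (-s ^ 2) * (n / (n - 1))) ^ m :=
        sum_le_sum fun σ _ => hσ σ
    _ = _ := by simp

theorem statement4 :
    ∃ k₀ : ℕ, ∀ k : ℕ, k₀ ≤ k → ∀ c : ℝ, 0 ≤ c → c ≤ 4 →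
      ∀ d : ℝ, d = 2 * k * Real.log k - Real.log k - c →
      Tendsto (fun n : ℕ =>
          prob (fun G : GraphSpace n ⌈d * n / 2⌉₊ =>
            ∀ σ : Fin n → Fin k, IsColoring G.1 σ →
              ∀ i : Fin k,
                |(Nat.card {v : Fin n // σ v = i} : ℝ) - n / k| ≤
                  n / (k * Real.log k ^ ((1 : ℝ) / 3))))
        atTop (nhds 1) := by
  refine ⟨⌈Real.exp 1000⌉₊, fun k hk₀ c hc₀ hc₄ d hd => ?_⟩
  have hk : Real.exp 1000 ≤ k := Nat.ceil_le.1 hk₀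
  have hk₁ : (1 : ℝ) < k := by linarith [Real.add_one_le_exp 1000]
  have hL : 1000 ≤ Real.log k := (Real.le_log_iff_exp_le (by linarith)).2 hk
  set s := 1 / (k * Real.log k ^ ((1 : ℝ) / 3))
  have hs : 0 < s := by positivity
  have hd₀ : 0 ≤ d := by rw [hd]; nlinarith
  have hr₀ : 0 < (1 - 1 / k) * Real.exp (-s ^ 2) :=
    mul_pos (by rw [sub_pos, div_lt_one (by linarith)]; exact hk₁) (Real.exp_pos _)
  have hr₁ : (1 - 1 / k) * Real.exp (-s ^ 2) ≤ 1 :=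
    mul_le_one₀ (sub_le_self _ (by positivity)) (Real.exp_pos _).le (Real.exp_le_one_iff.2 (neg_nonpos.2 (sq_nonneg s)))
  apply tendsto_prob_one_of_tendsto_prob_not_zero (eventually_nonempty_graphSpace d)
  refine squeeze_zero' (Eventually.of_forall fun n => prob_nonneg _) ?_
    (tendsto_pow_mul_pow_ceil_atTop_nhds_zero (by linarith) hr₀ hr₁ hd₀
      (log_add_half_mul_log_lt_zero hk hc₀ hc₄ hd))
  filter_upwards [eventually_ge_atTop 2] with n hn
  refine (prob_mono fun G hG => ?_).trans (prob_exists_unbalanced_coloring_le _ hn hs.le)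
  push Not at hG
  obtain ⟨σ, hσ, i, hi⟩ := hG
  exact ⟨σ, hσ, i, by rw [mul_one_div]; exact hi.le⟩
end

section
/- There is a constant k_0 ∈ ℕ such that for every k ≥ k_0 and every d with 2k·ln k − ln k − 4 ≤ d ≤ 2k·ln k, the following holds for all sufficiently large n and every near-balanced σ: V → {1,...,k}: in the random multigraph G'(σ), letting T be the number of vertices v ∈ V for which there exists j ∈ {1,...,k}\{σ(v)} with e(v,V_j) > 100·ln k, we have P[T > n/(4k·ln k)] ≤ exp(−10n/k). -/
/-- The sample space of the random multigraph `G'(σ)`: `m` ordered pairs drawn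
uniformly and independently from `{(u,v) : σ u ≠ σ v}`. -/
abbrev CondSpace (n m k : ℕ) (σ : Fin n → Fin k) : Type :=
  {e : Fin m → Fin n × Fin n // ∀ i : Fin m, σ (e i).1 ≠ σ (e i).2}

/-- `e(A,B)`: the number of edges (with multiplicity) with one endpoint in `A`
and the other in `B`. -/
noncomputable def eSet {n m : ℕ} (e : Fin m → Fin n × Fin n) (A B : Set (Fin n)) : ℕ :=
  Nat.card {t : Fin m // ((e t).1 ∈ A ∧ (e t).2 ∈ B) ∨ ((e t).1 ∈ B ∧ (e t).2 ∈ A)}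

/-- `σ` is near-balanced: every color class has size `n/k` up to `n/(k·(ln k)^{1/3})`. -/
def NearBalanced (n k : ℕ) (σ : Fin n → Fin k) : Prop :=
  ∀ i : Fin k,
    |(Nat.card {v : Fin n // σ v = i} : ℝ) - n / k| ≤ n / (k * Real.log k ^ ((1 : ℝ) / 3))

open Finset Real
open scoped Nat

theorem prob_le_prob_of_equiv {Ω Ω' : Type*} [Finite Ω'] (e : Ω ≃ Ω') {p : Ω → Prop}
    {q : Ω' → Prop} (h : ∀ x, p x → q (e x)) : prob p ≤ prob q := by
  unfold prob
  rw [Nat.card_congr e]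
  gcongr
  exact Nat.card_le_card_of_injective (fun x => ⟨e x.1, h x.1 x.2⟩)
    fun x y hxy => Subtype.ext (e.injective (congrArg Subtype.val hxy))

theorem prob_eq_card_filter_div {Ω : Type*} [Fintype Ω] (p : Ω → Prop) [DecidablePred p] :
    prob p = #{x | p x} / Fintype.card Ω := by
  rw [prob, Nat.card_eq_fintype_card, Nat.card_eq_fintype_card, Fintype.card_subtype]

theorem choose_le_exp_one_mul_div_pow (a b : ℕ) : (a.choose b : ℝ) ≤ (exp 1 * a / b) ^ b := by
  rcases b.eq_zero_or_pos with rfl | hb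
  · simp
  have hbb : (b : ℝ) ^ b / b ! ≤ exp b := pow_div_factorial_le_exp (x := (b : ℝ)) (by positivity) b
  calc (a.choose b : ℝ) ≤ a ^ b / b ! := Nat.choose_le_pow_div b a
    _ = (a / b) ^ b * ((b : ℝ) ^ b / b !) := by rw [div_pow]; field_simp
    _ ≤ (a / b) ^ b * exp b := by gcongr
    _ = (exp 1 * a / b) ^ b := by
      rw [← Real.exp_one_pow]; ring

theorem choose_mul_pow_le_exp {a b : ℕ} {q c : ℝ} (hq : 0 ≤ q)
    (h : exp 1 * a / b * q ≤ exp c) : a.choose b * q ^ b ≤ exp (b * c) :=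
  calc a.choose b * q ^ b ≤ (exp 1 * a / b) ^ b * q ^ b := by
        gcongr; exact choose_le_exp_one_mul_div_pow a b
    _ = (exp 1 * a / b * q) ^ b := (mul_pow _ _ _).symm
    _ ≤ exp c ^ b := by gcongr
    _ = exp (b * c) := by rw [← Real.exp_nat_mul]

section FunctionCounting

variable {ι α : Type*} [Fintype ι] [Fintype α] [DecidableEq ι] [DecidableEq α]

theorem card_filter_forall_mem (I : Finset ι) (B : Finset α) :
    #{f : ι → α | ∀ i ∈ I, f i ∈ B} = #B ^ #I * Fintype.card α ^ (Fintype.card ι - #I) := by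
  have : ({f : ι → α | ∀ i ∈ I, f i ∈ B} : Finset (ι → α))
      = Fintype.piFinset fun i => if i ∈ I then B else univ := by
    ext f
    simp only [mem_filter, mem_univ, true_and, Fintype.mem_piFinset]
    exact ⟨fun h i => by split_ifs with hi <;> simp [h, hi], fun h i hi => by simpa [hi] using h i⟩
  rw [this, Fintype.card_piFinset]
  simp only [apply_ite card, prod_ite, prod_const, card_univ, filter_mem_eq_inter, univ_inter,
    filter_not, ← compl_eq_univ_sdiff, card_compl]

theorem card_filter_many_mem_le (B : Finset α) (s : ℕ) :
    #{f : ι → α | s ≤ #{i | f i ∈ B}}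
      ≤ (Fintype.card ι).choose s * (#B ^ s * Fintype.card α ^ (Fintype.card ι - s)) :=
  calc #{f : ι → α | s ≤ #{i | f i ∈ B}}
      ≤ #((powersetCard s univ).biUnion fun I => {f : ι → α | ∀ i ∈ I, f i ∈ B}) := by
        refine card_le_card fun f hf => ?_
        obtain ⟨I, hI, hIs⟩ := exists_subset_card_eq (mem_filter.1 hf).2
        exact mem_biUnion.2 ⟨I, mem_powersetCard.2 ⟨subset_univ I, hIs⟩,
          mem_filter.2 ⟨mem_univ f, fun i hi => (mem_filter.1 (hI hi)).2⟩⟩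
    _ ≤ ∑ I ∈ powersetCard s univ, #{f : ι → α | ∀ i ∈ I, f i ∈ B} := card_biUnion_le
    _ = _ := by
      rw [sum_congr rfl fun I hI => by rw [card_filter_forall_mem, (mem_powersetCard.1 hI).2],
        sum_const, card_powersetCard, card_univ, smul_eq_mul]

end FunctionCounting

section HeavyElements

variable {ι α κ : Type*} [Fintype ι] [Fintype κ]
  (R : κ → α → Prop) [∀ w a, Decidable (R w a)] {r M t s : ℕ} {L : ℝ}

theorem le_card_filter_exists_of_heavy (hr : ∀ a, #{w | R w a} ≤ r) (f : ι → α)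
    {W : Finset κ} (hW : ∀ w ∈ W, L < #{i | R w (f i)}) (hs : r * (s - 1 : ℝ) < #W * L) :
    s ≤ #{i | ∃ w ∈ W, R w (f i)} := by
  set H : Finset ι := {i | ∃ w ∈ W, R w (f i)}
  have hdouble : #W • L ≤ #H • (r : ℝ) := by
    refine card_nsmul_le_card_nsmul (fun w i => R w (f i)) (fun w hw => ?_) fun i _ => ?_
    · refine (hW w hw).le.trans (Nat.cast_le.2 (card_le_card fun i hi => ?_))
      have hi := (mem_filter.1 hi).2
      exact mem_filter.2 ⟨mem_filter.2 ⟨mem_univ i, w, hw, hi⟩, hi⟩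
    · exact Nat.cast_le.2 ((card_le_card (filter_subset_filter _ (subset_univ W))).trans (hr _))
  rw [nsmul_eq_mul, nsmul_eq_mul] at hdouble
  by_contra! hH
  have : (#H : ℝ) ≤ s - 1 := by
    have : #H + 1 ≤ s := hH
    exact le_sub_iff_add_le.2 (by exact_mod_cast this)
  nlinarith [(Nat.cast_nonneg r : (0 : ℝ) ≤ r)]

variable [Fintype α] [DecidableEq ι] [DecidableEq α]

theorem card_filter_many_heavy_le (hr : ∀ a, #{w | R w a} ≤ r)
    (hM : ∀ w, #{a | R w a} ≤ M) (hs : r * (s - 1 : ℝ) < t * L) :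
    #{f : ι → α | t ≤ #{w | L < #{i | R w (f i)}}}
      ≤ (Fintype.card κ).choose t
        * ((Fintype.card ι).choose s * ((t * M) ^ s * Fintype.card α ^ (Fintype.card ι - s))) := by
  let hits (W : Finset κ) : Finset α := W.biUnion fun w => {a | R w a}
  calc #{f : ι → α | t ≤ #{w | L < #{i | R w (f i)}}}
      ≤ #((powersetCard t univ).biUnion fun W => {f : ι → α | s ≤ #{i | f i ∈ hits W}}) := by
        refine card_le_card fun f hf => ?_
        obtain ⟨W, hW, hWt⟩ := exists_subset_card_eq (mem_filter.1 hf).2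
        refine mem_biUnion.2 ⟨W, mem_powersetCard.2 ⟨subset_univ W, hWt⟩, mem_filter.2
          ⟨mem_univ f, ?_⟩⟩
        have := le_card_filter_exists_of_heavy R hr f (fun w hw => (mem_filter.1 (hW hw)).2)
          (hWt ▸ hs)
        simpa [hits] using this
    _ ≤ ∑ W ∈ powersetCard t univ, #{f : ι → α | s ≤ #{i | f i ∈ hits W}} := card_biUnion_le
    _ ≤ ∑ W ∈ powersetCard t (univ : Finset κ),
          (Fintype.card ι).choose s * ((t * M) ^ s * Fintype.card α ^ (Fintype.card ι - s)) := by
        refine sum_le_sum fun W hW => (card_filter_many_mem_le _ s).trans ?_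
        have : #(hits W) ≤ t * M := by
          refine card_biUnion_le.trans ?_
          rw [← (mem_powersetCard.1 hW).2, ← smul_eq_mul, ← sum_const]
          exact sum_le_sum fun w _ => hM w
        gcongr
    _ = _ := by rw [sum_const, card_powersetCard, card_univ, smul_eq_mul]

theorem prob_many_heavy_le [Nonempty α] (hr : ∀ a, #{w | R w a} ≤ r)
    (hM : ∀ w, #{a | R w a} ≤ M) (hs : r * (s - 1 : ℝ) < t * L) :
    prob (fun f : ι → α => t ≤ #{w | L < #{i | R w (f i)}})
      ≤ (Fintype.card κ).choose t
        * ((Fintype.card ι).choose s * (t * M / Fintype.card α : ℝ) ^ s) := by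
  have hα : (0 : ℝ) < Fintype.card α := by exact_mod_cast Fintype.card_pos
  rw [prob_eq_card_filter_div, Fintype.card_fun, div_le_iff₀ (by positivity)]
  refine (Nat.cast_le.2 (card_filter_many_heavy_le R hr hM hs)).trans_eq ?_
  rcases le_or_gt s (Fintype.card ι) with hsι | hsι
  · push_cast
    rw [div_pow, pow_sub₀ _ hα.ne' hsι]
    field_simp
  · simp [Nat.choose_eq_zero_of_lt hsι]

end HeavyElements

section CrossPairs

variable {V K : Type*} [DecidableEq K] (σ : V → K)

abbrev CrossPair : Type _ := {p : V × V // σ p.1 ≠ σ p.2}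

theorem card_mul_card_le_card_crossPair_add [Fintype V] {M : ℕ}
    (hM : ∀ j, #{u | σ u = j} ≤ M) :
    Fintype.card V * Fintype.card V ≤ Fintype.card (CrossPair σ) + Fintype.card V * M := by
  have hsame : #{p : V × V | σ p.1 = σ p.2} ≤ Fintype.card V * M := by
    rw [card_filter, Fintype.sum_prod_type]
    simp only [← card_filter]
    rw [← smul_eq_mul, ← card_univ, ← sum_const]
    exact sum_le_sum fun u _ => by simpa [eq_comm] using hM (σ u)
  rw [Fintype.card_subtype, ← Fintype.card_prod, ← card_univ,
    ← card_filter_add_card_filter_not (fun p : V × V => σ p.1 ≠ σ p.2)]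
  simp only [not_not]
  omega

variable [DecidableEq V]

def JoinsClass (w : V × K) (p : V × V) : Prop :=
  p.1 = w.1 ∧ σ p.2 = w.2 ∨ σ p.1 = w.2 ∧ p.2 = w.1

instance (w : V × K) : DecidablePred (JoinsClass σ w) := fun p => by
  unfold JoinsClass; infer_instance

theorem card_filter_joinsClass_le_two [Fintype V] [Fintype K] (p : V × V) :
    #{w | JoinsClass σ w p} ≤ 2 := by
  refine (card_le_card (t := {(p.1, σ p.2), (p.2, σ p.1)}) fun w hw => ?_).trans card_le_two
  obtain ⟨v, j⟩ := w
  rcases (mem_filter.1 hw).2 with ⟨rfl, rfl⟩ | ⟨rfl, rfl⟩ <;> simp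

theorem card_filter_joinsClass_le [Fintype V] (w : V × K) :
    #{a : CrossPair σ | JoinsClass σ w a.1} ≤ 2 * #{u | σ u = w.2} := by
  let C : Finset V := {u | σ u = w.2}
  calc #{a : CrossPair σ | JoinsClass σ w a.1}
      ≤ #({w.1} ×ˢ C ∪ C ×ˢ {w.1}) := by
        refine card_le_card_of_injOn Subtype.val (fun ⟨⟨u, v⟩, _⟩ ha => ?_)
          Subtype.val_injective.injOn
        rcases (mem_filter.1 ha).2 with ⟨rfl, h⟩ | ⟨h, rfl⟩ <;> simp [C, h]
    _ ≤ #({w.1} ×ˢ C) + #(C ×ˢ {w.1}) := card_union_le _ _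
    _ = 2 * #C := by rw [card_product, card_product, card_singleton]; ring

end CrossPairs

theorem eSet_singleton_eq_card_joinsClass {n m k : ℕ} (σ : Fin n → Fin k)
    (g : Fin m → Fin n × Fin n) (v : Fin n) (j : Fin k) :
    eSet g {v} {u | σ u = j} = #{i | JoinsClass σ (v, j) (g i)} := by
  rw [eSet, Nat.card_eq_fintype_card, Fintype.card_subtype]
  simp [JoinsClass]

section RandomGraph

variable {n m k : ℕ} (σ : Fin n → Fin k)

theorem card_heavy_le_card_heavy_pairs (L : ℝ) (g : Fin m → Fin n × Fin n) :
    Nat.card {v : Fin n // ∃ j : Fin k, j ≠ σ v ∧ L < (eSet g {v} {u | σ u = j} : ℝ)}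
      ≤ #{w : Fin n × Fin k | L < #{i | JoinsClass σ w (g i)}} := by
  rw [Nat.card_eq_fintype_card, Fintype.card_subtype]
  refine card_le_card_of_surjOn Prod.fst fun v hv => ?_
  obtain ⟨j, -, hj⟩ := (mem_filter.1 hv).2
  exact ⟨(v, j), by simpa [eSet_singleton_eq_card_joinsClass] using hj, rfl⟩

theorem prob_many_heavy_vertices_le [Nonempty (CrossPair σ)] {M s : ℕ} {L x : ℝ}
    (hM : ∀ j, #{u | σ u = j} ≤ M) (hs : 2 * (s - 1 : ℝ) < ⌈x⌉₊ * L) :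
    prob (fun e : CondSpace n m k σ => x < (Nat.card {v : Fin n // ∃ j : Fin k, j ≠ σ v ∧
        L < (eSet e.1 {v} {u | σ u = j} : ℝ)} : ℝ))
      ≤ (n * k).choose ⌈x⌉₊
        * (m.choose s * (⌈x⌉₊ * (2 * M) / Fintype.card (CrossPair σ) : ℝ) ^ s) := by
  calc _ ≤ prob (fun f : Fin m → CrossPair σ =>
          ⌈x⌉₊ ≤ #{w : Fin n × Fin k | L < #{i | JoinsClass σ w (f i).1}}) :=
        prob_le_prob_of_equiv Equiv.subtypePiEquivPi fun e he => Nat.ceil_le.2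
          (he.le.trans (by exact_mod_cast card_heavy_le_card_heavy_pairs σ L e.1))
    _ ≤ _ := by
        have := prob_many_heavy_le (ι := Fin m) (fun w (a : CrossPair σ) => JoinsClass σ w a.1)
          (fun a => card_filter_joinsClass_le_two σ a.1)
          (fun w => (card_filter_joinsClass_le σ w).trans (Nat.mul_le_mul_left 2 (hM w.2))) hs
        simpa using this

end RandomGraph

section Estimates

theorem NearBalanced.card_fiber_le {n k : ℕ} {σ : Fin n → Fin k} (hσ : NearBalanced n k σ)
    (hk : exp 1000 ≤ k) (j : Fin k) : (#{u | σ u = j} : ℝ) ≤ 1.1 * n / k := by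
  have hk₀ : (0 : ℝ) < k := (exp_pos _).trans_le hk
  have hL : 1000 ≤ log k := (le_log_iff_exp_le hk₀).2 hk
  have hroot : (10 : ℝ) ≤ log k ^ ((1 : ℝ) / 3) :=
    calc (10 : ℝ) = (10 ^ (3 : ℝ)) ^ ((1 : ℝ) / 3) := by rw [← rpow_mul] <;> norm_num
      _ ≤ log k ^ ((1 : ℝ) / 3) := by gcongr; norm_num; linarith
  have hdev : (n : ℝ) / (k * log k ^ ((1 : ℝ) / 3)) ≤ n / (k * 10) := by gcongr
  have h := (abs_le.1 (hσ j)).2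
  rw [Nat.card_eq_fintype_card, Fintype.card_subtype] at h
  have : (1.1 : ℝ) * n / k = n / k + n / (k * 10) := by field_simp; ring
  linarith

theorem NearBalanced.le_card_crossPair {n k : ℕ} {σ : Fin n → Fin k} (hσ : NearBalanced n k σ)
    (hk : exp 1000 ≤ k) : 0.9 * (n : ℝ) ^ 2 ≤ Fintype.card (CrossPair σ) := by
  have h := card_mul_card_le_card_crossPair_add σ
    (M := ⌊(1.1 : ℝ) * n / k⌋₊) fun j => Nat.le_floor (hσ.card_fiber_le hk j)
  simp only [Fintype.card_fin] at h
  have hk₀ : (0 : ℝ) < k := (exp_pos _).trans_le hk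
  have hM : (⌊(1.1 : ℝ) * n / k⌋₊ : ℝ) ≤ 0.1 * n := by
    refine (Nat.floor_le (by positivity)).trans ?_
    rw [div_le_iff₀ hk₀]
    nlinarith [add_one_le_exp (1000 : ℝ), (Nat.cast_nonneg n : (0 : ℝ) ≤ n)]
  have h' : (n : ℝ) * n ≤ Fintype.card (CrossPair σ) + n * ⌊(1.1 : ℝ) * n / k⌋₊ := by
    exact_mod_cast h
  nlinarith [(Nat.cast_nonneg n : (0 : ℝ) ≤ n)]

theorem natCeil_mul_div_two_le {k n : ℕ} {d : ℝ} (hk : exp 1000 ≤ k) (hn : 0 < n) (hd₀ : 0 ≤ d)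
    (hd : d ≤ 2 * k * log k) : (⌈d * n / 2⌉₊ : ℝ) ≤ 1.01 * k * log k * n := by
  have hk₀ : (0 : ℝ) < k := (exp_pos _).trans_le hk
  have hL : 1000 ≤ log k := (le_log_iff_exp_le hk₀).2 hk
  have hn₁ : (1 : ℝ) ≤ n := by exact_mod_cast hn
  have hkL : 100 ≤ k * log k := by nlinarith [add_one_le_exp (1000 : ℝ)]
  have : d * n / 2 ≤ k * log k * n := by nlinarith
  have : 1 ≤ 0.01 * (k * log k * n) := by nlinarith
  linarith [Nat.ceil_lt_add_one (by positivity : 0 ≤ d * n / 2)]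

theorem choose_mul_choose_mul_pow_le_exp {k n m t s : ℕ} {M N : ℝ} (hk : exp 1000 ≤ k)
    (hn : (0 : ℝ) < n) (hm : m ≤ 1.01 * k * log k * n) (ht₁ : n / (4 * k * log k) ≤ t)
    (ht₂ : t ≤ 1.01 * (n / (4 * k * log k))) (hs : 25 * (n : ℝ) / (2 * k) ≤ s) (hM₀ : 0 ≤ M)
    (hM : M ≤ 1.1 * n / k) (hN : 0.9 * (n : ℝ) ^ 2 ≤ N) :
    ((n * k).choose t : ℝ) * (m.choose s * (t * (2 * M) / N) ^ s) ≤ exp (-10 * n / k) := by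
  have hk₀ : (0 : ℝ) < k := (exp_pos _).trans_le hk
  have hL : 1000 ≤ log k := (le_log_iff_exp_le hk₀).2 hk
  have hLk : log k ≤ k := log_le_self hk₀.le
  have hk1000 : (1000 : ℝ) ≤ k := by linarith [add_one_le_exp (1000 : ℝ)]
  have he : exp 1 ≤ 3 := by linarith [exp_one_lt_d9]
  have hx : 0 < n / (4 * k * log k) := by positivity
  have hN₀ : 0 < N := lt_of_lt_of_le (by positivity) hN
  have hq : 0 ≤ t * (2 * M) / N := by positivity
  have hpairs : exp 1 * ↑(n * k) / t * 1 ≤ exp (4 * log k) := by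
    rw [show (4 : ℝ) * log k = (4 : ℕ) * log k by norm_num, exp_nat_mul, exp_log hk₀, mul_one]
    refine div_le_of_le_mul₀ (by positivity) (by positivity) ?_
    calc exp 1 * ↑(n * k) ≤ k ^ 4 * (n / (4 * k * log k)) := by
          rw [mul_div_assoc', le_div_iff₀ (by positivity)]; push_cast
          have : exp 1 * (4 * log k) ≤ k * k := by nlinarith
          nlinarith [mul_le_mul_of_nonneg_left this (by positivity : (0 : ℝ) ≤ n * k * k * k)]
      _ ≤ k ^ 4 * t := by gcongr
  have hedges : exp 1 * m / s * (t * (2 * M) / N) ≤ exp (-1) := by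
    have hmt : (m * t : ℝ) ≤ 0.26 * n ^ 2 :=
      calc (m * t : ℝ) ≤ 1.01 * k * log k * n * (1.01 * (n / (4 * k * log k))) := by gcongr
        _ ≤ 0.26 * n ^ 2 := by field_simp; nlinarith
    have hs₀ : (0 : ℝ) < s := lt_of_lt_of_le (by positivity) hs
    rw [show exp 1 * m / s * (t * (2 * M) / N) = exp 1 * 2 * (m * t) * M / (s * N) by ring,
      div_le_iff₀ (by positivity), exp_neg]
    calc exp 1 * 2 * (m * t) * M ≤ 3 * 2 * (0.26 * n ^ 2) * (1.1 * n / k) := by gcongr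
      _ ≤ 3⁻¹ * (25 * n / (2 * k) * (0.9 * n ^ 2)) := by
          have : 0 ≤ (n : ℝ) ^ 3 * (k : ℝ)⁻¹ := by positivity
          rw [div_eq_mul_inv, div_eq_mul_inv, mul_inv]; ring_nf; linarith
      _ ≤ (exp 1)⁻¹ * (s * N) := by gcongr
  have hexp : t * (4 * log k) - s ≤ -10 * n / k := by
    have : (t : ℝ) * (4 * log k) ≤ 1.01 * (n / k) :=
      calc (t : ℝ) * (4 * log k) ≤ 1.01 * (n / (4 * k * log k)) * (4 * log k) := by gcongr
        _ = 1.01 * (n / k) := by field_simp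
    rw [show 25 * (n : ℝ) / (2 * k) = 12.5 * (n / k) by ring] at hs
    rw [show -10 * (n : ℝ) / k = -10 * (n / k) by ring]
    linarith [div_nonneg hn.le hk₀.le]
  calc ((n * k).choose t : ℝ) * (m.choose s * (t * (2 * M) / N) ^ s)
      ≤ exp (t * (4 * log k)) * exp (s * (-1)) := by
        refine mul_le_mul ?_ (choose_mul_pow_le_exp hq hedges) (by positivity) (exp_pos _).le
        simpa using choose_mul_pow_le_exp zero_le_one hpairs
    _ = exp (t * (4 * log k) - s) := by rw [← exp_add]; ring_nf
    _ ≤ exp (-10 * n / k) := exp_le_exp.2 hexp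

end Estimates

theorem statement13 :
    ∃ k₀ : ℕ, ∀ k : ℕ, k₀ ≤ k → ∀ d : ℝ,
      2 * k * Real.log k - Real.log k - 4 ≤ d → d ≤ 2 * k * Real.log k →
      ∃ n₀ : ℕ, ∀ n : ℕ, n₀ ≤ n → ∀ σ : Fin n → Fin k, NearBalanced n k σ →
        prob (fun e : CondSpace n ⌈d * n / 2⌉₊ k σ =>
            n / (4 * k * Real.log k) <
              (Nat.card {v : Fin n // ∃ j : Fin k, j ≠ σ v ∧
                  100 * Real.log k < (eSet e.1 {v} {u | σ u = j} : ℝ)} : ℝ))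
          ≤ Real.exp (-10 * n / k) := by
  -- `ln k ≥ 1000` makes `(ln k)^{1/3} ≥ 10`, so near-balanced classes have at most `1.1 n / k`
  -- vertices; `n ≥ k³` makes `n / (4 k ln k)` large, so `⌈n / (4 k ln k)⌉ ≤ 1.01 n / (4 k ln k)`.
  refine ⟨⌈exp 1000⌉₊, fun k hk d hd₁ hd₂ => ⟨k ^ 3, fun n hn σ hσ => ?_⟩⟩
  replace hk : exp 1000 ≤ k := Nat.ceil_le.1 hk
  have hk₀ : (0 : ℝ) < k := (exp_pos _).trans_le hk
  have hL : 1000 ≤ log k := (le_log_iff_exp_le hk₀).2 hk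
  have hk1000 : (1000 : ℝ) ≤ k := by linarith [add_one_le_exp (1000 : ℝ)]
  have hkL : 1000 * (k * log k) ≤ n := by
    have : 1000 * log k ≤ k * k := by nlinarith [log_le_self hk₀.le]
    nlinarith [(by exact_mod_cast hn : (k : ℝ) ^ 3 ≤ n)]
  have hn₀ : (0 : ℝ) < n := by nlinarith
  have hN := hσ.le_card_crossPair hk
  have : Nonempty (CrossPair σ) := Fintype.card_pos_iff.1 <| by
    exact_mod_cast (by positivity : (0 : ℝ) < 0.9 * n ^ 2).trans_le hN
  have hm := natCeil_mul_div_two_le hk (by exact_mod_cast hn₀) (by nlinarith) hd₂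
  set x := n / (4 * k * log k) with hx
  have ht : (⌈x⌉₊ : ℝ) ≤ 1.01 * x := by
    have : 250 ≤ x := by rw [hx, le_div_iff₀ (by positivity)]; linarith
    linarith [Nat.ceil_lt_add_one (by positivity : 0 ≤ x)]
  have hs : 2 * (⌈25 * (n : ℝ) / (2 * k)⌉₊ - 1 : ℝ) < ⌈x⌉₊ * (100 * log k) := by
    have h25 : 2 * (25 * n / (2 * k)) = x * (100 * log k) := by rw [hx]; field_simp; ring
    have : x * (100 * log k) ≤ ⌈x⌉₊ * (100 * log k) := by gcongr; exact Nat.le_ceil x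
    linarith [Nat.ceil_lt_add_one (by positivity : 0 ≤ 25 * (n : ℝ) / (2 * k))]
  calc _ ≤ _ := prob_many_heavy_vertices_le σ (fun j => Nat.le_floor (hσ.card_fiber_le hk j)) hs
    _ ≤ _ := choose_mul_choose_mul_pow_le_exp hk hn₀ hm (Nat.le_ceil x) ht (Nat.le_ceil _)
        (by positivity) (Nat.floor_le (by positivity)) hN
end
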